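/- arXiv:1810.05616 — 7 statements merged into one kernel-verified Lean document; each statement's English description precedes it below -/
import Mathlib

section
/- Let $Q$ be a convex quadrilateral in the complex plane with vertices $0, 1, z, w$ in counterclockwise order, and let $X > 0$ be a real number. Then the quadratic equation in $u$ given by $-\frac{(1-u)(w-u)}{(0-u)(z-u)} = X$ has two solutions (counted with multiplicity), both of which lie strictly inside $Q$. -/
/-!
The equation says that `(1 - u)(w - u) / (u (z - u))` is a negative real. For a root `u` and any
edge `AB` of the quadrilateral `ABCD`, the two products `(B - u) conj (A - u) · (D - u) conj (C - u)`
and `(C - u) conj (B - u) · (A - u) conj (D - u)` are then negative reals, so the orientations of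
`u` with respect to opposite edges have the same sign. These four orientations add up to twice
the area of the quadrilateral, and convexity forbids `u` from lying outside two opposite edges
at once, so `u` lies strictly on the inner side of every edge.
-/

open Complex

/-- Cross product (orientation) of three points in ℂ: positive iff `a,b,c` are in
counterclockwise order. -/
noncomputable def ccw (a b c : ℂ) : ℝ := ((starRingEnd ℂ) (b - a) * (c - a)).im

open ComplexConjugate

lemma ccw_eq (a b c : ℂ) :
    ccw a b c = (b.re - a.re) * (c.im - a.im) - (b.im - a.im) * (c.re - a.re) := by
  simp only [ccw, mul_im, conj_re, conj_im, sub_re, sub_im]; ring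

lemma ccw_self_left (a c : ℂ) : ccw a a c = 0 := by simp [ccw]

lemma ccw_rotate (a b c : ℂ) : ccw a b c = ccw b c a := by simp only [ccw_eq]; ring

lemma im_sub_mul_conj_sub (a b u : ℂ) : ((b - u) * conj (a - u)).im = ccw a b u := by
  simp only [ccw_eq, mul_im, conj_re, conj_im, sub_re, sub_im]; ring

lemma continuous_ccw (a b : ℂ) : Continuous (ccw a b) :=
  continuous_im.comp (continuous_const.mul (continuous_id.sub continuous_const))

lemma im_pos_of_mul_eq_ofReal_neg {E F : ℂ} {t : ℝ} (ht : t < 0) (h : E * F = t)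
    (hF : 0 < F.im) : 0 < E.im := by
  have hF0 : F ≠ 0 := fun h0 => by simp [h0] at hF
  have hE : E = t * F⁻¹ := by rw [← h, mul_inv_cancel_right₀ hF0]
  have hn : 0 < normSq F := normSq_pos.2 hF0
  rw [hE, im_ofReal_mul, inv_im, neg_div]
  exact mul_pos_of_neg_of_neg ht (neg_neg_of_pos (div_pos hF hn))

lemma im_pos_iff_of_mul_eq_ofReal_neg {E F : ℂ} {t : ℝ} (ht : t < 0) (h : E * F = t) :
    0 < E.im ↔ 0 < F.im :=
  ⟨im_pos_of_mul_eq_ofReal_neg ht (mul_comm E F ▸ h), im_pos_of_mul_eq_ofReal_neg ht h⟩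

lemma ccw_pos_or_ccw_pos_of_convex {A B C D u : ℂ}
    (h1 : 0 < ccw A B C) (h2 : 0 < ccw B C D) (h3 : 0 < ccw C D A) (h4 : 0 < ccw D A B)
    (hq : 0 ≤ ccw B C u) (hm : 0 ≤ ccw D A u) : 0 < ccw A B u ∨ 0 < ccw C D u := by
  by_contra! h
  obtain ⟨hp, hr⟩ := h
  -- `cr` is the cross product of `B - A` and `D - C`; its sign says on which side the lines
  -- `AB` and `CD` meet, and decides which of the two affine identities below is violated
  set cr := (B.re - A.re) * (D.im - C.im) - (B.im - A.im) * (D.re - C.re)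
  have hBC : ccw B C D * ccw A B u - cr * ccw B C u + ccw A B C * ccw C D u
      = ccw A B C * ccw B C D := by simp only [cr, ccw_eq]; ring
  have hDA : ccw D A B * ccw C D u + cr * ccw D A u + ccw C D A * ccw A B u
      = ccw C D A * ccw D A B := by simp only [cr, ccw_eq]; ring
  rcases le_or_gt 0 cr with hcr | hcr
  · nlinarith [mul_pos h1 h2, mul_nonneg hcr hq]
  · nlinarith [mul_pos h3 h4, mul_nonpos_of_nonpos_of_nonneg hcr.le hm]

lemma ccw_pos_of_mul_sub_eq {A B C D u : ℂ} {X : ℝ} (hX : 0 < X)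
    (h1 : 0 < ccw A B C) (h2 : 0 < ccw B C D) (h3 : 0 < ccw C D A) (h4 : 0 < ccw D A B)
    (hu : (B - u) * (D - u) = -X * ((A - u) * (C - u))) : 0 < ccw A B u := by
  have hAC : (A - u) * (C - u) ≠ 0 := by
    intro h0
    rw [h0, mul_zero] at hu
    rcases mul_eq_zero.1 h0 with hA | hC <;> rcases mul_eq_zero.1 hu with hB | hD <;>
      rw [sub_eq_zero] at * <;> subst_vars <;> simp only [ccw_self_left, lt_irrefl] at *
  set t := -X * normSq ((A - u) * (C - u))
  have ht : t < 0 := by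
    simp only [t, neg_mul, neg_lt_zero]; exact mul_pos hX (normSq_pos.2 hAC)
  have h13 : (B - u) * conj (A - u) * ((D - u) * conj (C - u)) = t := by
    calc _ = (B - u) * (D - u) * conj ((A - u) * (C - u)) := by rw [map_mul]; ring
      _ = -X * ((A - u) * (C - u) * conj ((A - u) * (C - u))) := by rw [hu]; ring
      _ = t := by rw [mul_conj]; push_cast [t]; ring
  have h24 : (C - u) * conj (B - u) * ((A - u) * conj (D - u)) = t := by
    calc _ = (A - u) * (C - u) * conj ((B - u) * (D - u)) := by rw [map_mul]; ring
      _ = -X * ((A - u) * (C - u) * conj ((A - u) * (C - u))) := by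
        rw [hu, map_mul, map_neg, conj_ofReal]; ring
      _ = t := by rw [mul_conj]; push_cast [t]; ring
  have hsum : ccw A B u + ccw B C u + ccw C D u + ccw D A u = ccw A B C + ccw C D A := by
    simp only [ccw_eq]; ring
  have hpr := im_pos_iff_of_mul_eq_ofReal_neg ht h13
  have hqm := im_pos_iff_of_mul_eq_ofReal_neg ht h24
  simp only [im_sub_mul_conj_sub] at hpr hqm
  by_contra! hp
  have hr : ccw C D u ≤ 0 := not_lt.1 (mt hpr.2 hp.not_gt)
  have hq : 0 < ccw B C u ∧ 0 < ccw D A u := by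
    rcases lt_or_ge 0 (ccw B C u) with hq | hq
    · exact ⟨hq, hqm.1 hq⟩
    · have hm : 0 < ccw D A u := by linarith
      exact ⟨hqm.2 hm, hm⟩
  rcases ccw_pos_or_ccw_pos_of_convex h1 h2 h3 h4 hq.1.le hq.2.le with h | h <;> linarith

lemma mem_convexHull_triangle_of_ccw_nonneg {a b c v : ℂ} (h : 0 < ccw a b c)
    (ha : 0 ≤ ccw v b c) (hb : 0 ≤ ccw a v c) (hc : 0 ≤ ccw a b v) :
    v ∈ convexHull ℝ {a, b, c} := by
  have hw : ∑ i, ![ccw v b c, ccw a v c, ccw a b v] i = ccw a b c := by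
    simp only [Fin.sum_univ_three, Matrix.cons_val, ccw_eq]; ring
  have hv : ∑ i, ![ccw v b c, ccw a v c, ccw a b v] i • ![a, b, c] i = ccw a b c • v := by
    simp only [Fin.sum_univ_three, Matrix.cons_val, real_smul, Complex.ext_iff, add_re, add_im,
      mul_re, mul_im, ofReal_re, ofReal_im, ccw_eq]
    constructor <;> ring
  have hmem := Finset.univ.centerMass_mem_convexHull (R := ℝ) (s := {a, b, c})
    (w := ![ccw v b c, ccw a v c, ccw a b v]) (z := ![a, b, c])
    (by simp [Fin.forall_fin_succ, ha, hb, hc]) (hw ▸ h) (by simp [Fin.forall_fin_succ])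
  rwa [Finset.centerMass, hw, hv, inv_smul_smul₀ h.ne'] at hmem

lemma mem_interior_convexHull_of_ccw_pos {A B C D u : ℂ}
    (h1 : 0 < ccw A B C) (h3 : 0 < ccw C D A) (hp : 0 < ccw A B u) (hq : 0 < ccw B C u)
    (hr : 0 < ccw C D u) (hm : 0 < ccw D A u) :
    u ∈ interior (convexHull ℝ {A, B, C, D}) := by
  let S := {v | 0 < ccw A B v} ∩ {v | 0 < ccw B C v} ∩ {v | 0 < ccw C D v} ∩
    {v | 0 < ccw D A v}
  have hS : IsOpen S := by
    refine (((?_ : IsOpen _).inter ?_).inter ?_).inter ?_ <;>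
      exact isOpen_lt continuous_const (continuous_ccw _ _)
  refine mem_interior.2 ⟨S, ?_, hS, ⟨⟨⟨hp, hq⟩, hr⟩, hm⟩⟩
  rintro v ⟨⟨⟨hp, hq⟩, hr⟩, hm⟩
  -- the diagonal `AC` cuts the quadrilateral into the triangles `ABC` and `ACD`
  rcases le_or_gt (ccw A C v) 0 with hd | hd
  · refine convexHull_mono (s := {A, B, C}) (by simp [Set.insert_subset_iff]) <|
      mem_convexHull_triangle_of_ccw_nonneg h1 ?_ ?_ hp.le
    · rw [ccw_rotate]; exact hq.le
    · rw [ccw_eq] at hd ⊢; linarith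
  · refine convexHull_mono (s := {A, C, D}) (by simp [Set.insert_subset_iff]) <|
      mem_convexHull_triangle_of_ccw_nonneg (by rwa [ccw_rotate]) ?_ ?_ hd.le
    · rw [ccw_rotate]; exact hr.le
    · rw [ccw_rotate, ccw_rotate]; exact hm.le

lemma exists_quadratic_eq_mul_sub_mul_sub {K : Type*} [Field K] [IsAlgClosed K] [NeZero (2 : K)]
    {a : K} (b c : K) (ha : a ≠ 0) :
    ∃ x y : K, ∀ u, a * (u * u) + b * u + c = a * (u - x) * (u - y) := by
  obtain ⟨x, hx⟩ := exists_quadratic_eq_zero ha (IsAlgClosed.exists_eq_mul_self (discrim a b c))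
  refine ⟨x, -b / a - x, fun u => ?_⟩
  field_simp
  linear_combination hx

lemma mem_interior_of_root {z w v : ℂ} {X : ℝ} (hX : 0 < X)
    (hccw1 : 0 < ccw 0 1 z) (hccw2 : 0 < ccw 1 z w)
    (hccw3 : 0 < ccw z w 0) (hccw4 : 0 < ccw w 0 1)
    (hv : (1 - v) * (w - v) - (X : ℂ) * v * (z - v) = 0) :
    v ∈ interior (convexHull ℝ ({0, 1, z, w} : Set ℂ)) := by
  have hX' : (X : ℂ) ≠ 0 := ofReal_ne_zero.2 hX.ne'
  refine mem_interior_convexHull_of_ccw_pos hccw1 hccw3 ?_ ?_ ?_ ?_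
  · exact ccw_pos_of_mul_sub_eq hX hccw1 hccw2 hccw3 hccw4 (by linear_combination hv)
  · refine ccw_pos_of_mul_sub_eq (inv_pos.2 hX) hccw2 hccw3 hccw4 hccw1 ?_
    push_cast
    field_simp
    linear_combination hv
  · exact ccw_pos_of_mul_sub_eq hX hccw3 hccw4 hccw1 hccw2 (by linear_combination hv)
  · refine ccw_pos_of_mul_sub_eq (inv_pos.2 hX) hccw4 hccw1 hccw2 hccw3 ?_
    push_cast
    field_simp
    linear_combination hv

/-- if `0, 1, z, w` are the vertices of a convex quadrilateral in
counterclockwise order and `X > 0`, then the quadratic equation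
`-(1-u)(w-u)/((0-u)(z-u)) = X`, i.e. `(1-u)(w-u) - X u (z-u) = 0`, has two roots
(counted with multiplicity), both lying strictly inside the quadrilateral. -/
theorem stmt0 (z w : ℂ) (X : ℝ) (hX : 0 < X)
    (hccw1 : 0 < ccw 0 1 z) (hccw2 : 0 < ccw 1 z w)
    (hccw3 : 0 < ccw z w 0) (hccw4 : 0 < ccw w 0 1) :
    ∃ u₁ u₂ : ℂ,
      u₁ ∈ interior (convexHull ℝ ({0, 1, z, w} : Set ℂ)) ∧
      u₂ ∈ interior (convexHull ℝ ({0, 1, z, w} : Set ℂ)) ∧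
      ∀ u : ℂ, (1 - u) * (w - u) - (X : ℂ) * u * (z - u)
        = (1 + (X : ℂ)) * (u - u₁) * (u - u₂) := by
  have hX1 : 1 + (X : ℂ) ≠ 0 := by exact_mod_cast (by positivity : (1 + X) ≠ 0)
  obtain ⟨u₁, u₂, hfac⟩ := exists_quadratic_eq_mul_sub_mul_sub (-(1 + w + X * z)) w hX1
  replace hfac : ∀ u : ℂ, (1 - u) * (w - u) - (X : ℂ) * u * (z - u)
      = (1 + (X : ℂ)) * (u - u₁) * (u - u₂) := fun u => by linear_combination hfac u
  refine ⟨u₁, u₂, ?_, ?_, hfac⟩ <;>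
    exact mem_interior_of_root hX hccw1 hccw2 hccw3 hccw4 (by rw [hfac]; ring)
end

section
/- With notation as in the central move, if $u$ and $\tilde{u}$ are the two roots of the central relation with $X = -\frac{(u_2-u)(u_4-u)}{(u_1-u)(u_3-u)} \neq -1$, then for each index $i \in \{1,2,3,4\}$ (indices cyclic mod 4), $\frac{(\tilde{u}-u_i)(u-u_i)}{(u_{i+1}-u_i)(u_{i-1}-u_i)}$ equals $\frac{1}{1+X}$ when $i$ is odd and $\frac{1}{1+X^{-1}}$ when $i$ is even. -/
open Complex

/-- with `u`, `ũ` the two roots of the central relation and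
`X = -((u₂-u)(u₄-u))/((u₁-u)(u₃-u))`, for cyclic indices,
`((ũ-uᵢ)(u-uᵢ))/((u_{i+1}-uᵢ)(u_{i-1}-uᵢ))` equals `1/(1+X)` for odd `i` and
`1/(1+X⁻¹)` for even `i`. -/
theorem stmt3 (u ut u₁ u₂ u₃ u₄ : ℂ)
    (hdist : List.Pairwise (· ≠ ·) [u, u₁, u₂, u₃, u₄])
    (X : ℂ) (hXdef : X = -((u₂ - u) * (u₄ - u)) / ((u₁ - u) * (u₃ - u)))
    (hX : X ≠ -1) (hX0 : X ≠ 0)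
    (hd1 : (u₂ - u₁) * (u₄ - u₁) ≠ 0) (hd2 : (u₃ - u₂) * (u₁ - u₂) ≠ 0)
    (hd3 : (u₄ - u₃) * (u₂ - u₃) ≠ 0) (hd4 : (u₁ - u₄) * (u₃ - u₄) ≠ 0)
    (hVsum : u + ut = ((u₂ + u₄) + X * (u₁ + u₃)) / (1 + X))
    (hVprod : u * ut = (u₂ * u₄ + X * u₁ * u₃) / (1 + X)) :
    ((ut - u₁) * (u - u₁)) / ((u₂ - u₁) * (u₄ - u₁)) = 1 / (1 + X) ∧
    ((ut - u₂) * (u - u₂)) / ((u₃ - u₂) * (u₁ - u₂)) = 1 / (1 + X⁻¹) ∧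
    ((ut - u₃) * (u - u₃)) / ((u₄ - u₃) * (u₂ - u₃)) = 1 / (1 + X) ∧
    ((ut - u₄) * (u - u₄)) / ((u₁ - u₄) * (u₃ - u₄)) = 1 / (1 + X⁻¹) := by
  have h1 : (1 + X) ≠ 0 := by
    intro h; exact hX (by linear_combination h)
  have hs : (u + ut) * (1 + X) = (u₂ + u₄) + X * (u₁ + u₃) := by
    rw [hVsum]; field_simp
  have hp : (u * ut) * (1 + X) = u₂ * u₄ + X * u₁ * u₃ := by
    rw [hVprod]; field_simp
  have hXi : 1 + X⁻¹ = (1 + X) / X := by field_simp; ring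
  refine ⟨?_, ?_, ?_, ?_⟩
  · rw [div_eq_div_iff hd1 h1]; linear_combination hp - u₁ * hs
  · rw [hXi, one_div_div, div_eq_div_iff hd2 h1]
    linear_combination hp - u₂ * hs
  · rw [div_eq_div_iff hd3 h1]; linear_combination hp - u₃ * hs
  · rw [hXi, one_div_div, div_eq_div_iff hd4 h1]
    linear_combination hp - u₄ * hs
end

section
/- Let $u, u_1, u_2, u_3, u_4$ be distinct complex numbers with $u_1 - u_2 + u_3 - u_4 = 0$ (i.e., $u_1u_2u_3u_4$ is a parallelogram) and with $X := -\frac{(u_2-u)(u_4-u)}{(u_1-u)(u_3-u)}$ well-defined with $X \neq -1$. Then the second root of the central relation is $\tilde{u} = u + \frac{(u_1-u)+(u_2-u)+(u_3-u)+(u_4-u)}{2}$. -/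
/-
By Vieta, the two roots of the central relation sum to the weighted mean
`((u₂ + u₄) + X (u₁ + u₃)) / (1 + X)`. For a parallelogram the diagonals share their midpoint,
`u₁ + u₃ = u₂ + u₄`, so this mean is that common sum whatever `X` is, and
`ũ = (u₂ + u₄) - u` is the claimed expression.
-/

theorem add_mul_self_div_one_add {K : Type*} [Field K] {a X : K} (hX : 1 + X ≠ 0) :
    (a + X * a) / (1 + X) = a := by
  rw [show a + X * a = (1 + X) * a by ring, mul_div_cancel_left₀ a hX]

theorem stmt6_general (u u₁ u₂ u₃ u₄ : ℂ)
    (hpar : u₁ - u₂ + u₃ - u₄ = 0)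
    (X : ℂ)
    (hX : X ≠ -1) :
    ((u₂ + u₄) + X * (u₁ + u₃)) / (1 + X) - u
      = u + ((u₁ - u) + (u₂ - u) + (u₃ - u) + (u₄ - u)) / 2 := by
  have hdiag : u₁ + u₃ = u₂ + u₄ := by linear_combination hpar
  have hX' : 1 + X ≠ 0 := fun h => hX (by linear_combination h)
  rw [hdiag, add_mul_self_div_one_add hX']
  linear_combination (-1 / 2 : ℂ) * hdiag

/-- if `u₁ - u₂ + u₃ - u₄ = 0` (parallelogram case), the second root of
the central relation is `ũ = u + ((u₁-u)+(u₂-u)+(u₃-u)+(u₄-u))/2`. -/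
theorem stmt6 (u u₁ u₂ u₃ u₄ : ℂ)
    (hdist : List.Pairwise (· ≠ ·) [u, u₁, u₂, u₃, u₄])
    (hden : (u₁ - u) * (u₃ - u) ≠ 0)
    (hpar : u₁ - u₂ + u₃ - u₄ = 0)
    (X : ℂ) (hXdef : X = -((u₂ - u) * (u₄ - u)) / ((u₁ - u) * (u₃ - u)))
    (hX : X ≠ -1) :
    ((u₂ + u₄) + X * (u₁ + u₃)) / (1 + X) - u
      = u + ((u₁ - u) + (u₂ - u) + (u₃ - u) + (u₄ - u)) / 2 :=
  stmt6_general u u₁ u₂ u₃ u₄ hpar X hX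
end

section
/- Let $u, u_1, u_2, u_3, u_4$ be distinct complex numbers with $u_1 - u_2 + u_3 - u_4 = 0$, $X := -\frac{(u_2-u)(u_4-u)}{(u_1-u)(u_3-u)} > 0$, and suppose the central relation has a repeated root $\tilde{u} = u$. Then $u = \frac{u_1+u_3}{2} = \frac{u_2+u_4}{2}$, i.e., $u$ is the center of the parallelogram $u_1u_2u_3u_4$, and moreover $|u_1 - u_2| = |u_2 - u_3|$, i.e., the parallelogram is a rhombus. -/
/-!
The relations `u₁ - u₂ + u₃ - u₄ = 0` and `ũ = u` force `u₃ - u = -(u₁ - u)` and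
`u₄ - u = -(u₂ - u)`, so `u` is the centre and `X = -((u₂ - u) / (u₁ - u))²`.
Since `X > 0`, the ratio `w = (u₂ - u) / (u₁ - u)` of the half-diagonals is purely imaginary:
the diagonals are perpendicular, and `|1 - w| = |1 + w|` gives equal adjacent sides.
-/

open Complex

namespace Complex

theorem re_eq_zero_of_sq_eq_neg_ofReal {w : ℂ} {x : ℝ} (hx : 0 ≤ x) (h : w ^ 2 = -(x : ℂ)) :
    w.re = 0 := by
  have hre := congrArg re h
  have him := congrArg im h
  simp only [sq, mul_re, mul_im, neg_re, neg_im, ofReal_re, ofReal_im] at hre him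
  have : w.re ^ 2 = 0 := by nlinarith [sq_nonneg w.re, sq_nonneg w.im]
  exact pow_eq_zero_iff two_ne_zero |>.mp this

theorem norm_sub_mul_eq_norm_add_mul {w : ℂ} (hw : w.re = 0) (a : ℂ) :
    ‖a - w * a‖ = ‖a + w * a‖ := by
  have hsub : a - w * a = (1 - w) * a := by ring
  have hadd : a + w * a = (1 + w) * a := by ring
  rw [hsub, hadd, norm_mul, norm_mul]
  congr 1
  simp only [norm_def, normSq_apply, sub_re, add_re, one_re, sub_im, add_im, one_im, hw]
  ring_nf

end Complex

theorem stmt7_general (u u₁ u₂ u₃ u₄ : ℂ)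
    (hden : (u₁ - u) * (u₃ - u) ≠ 0)
    (hpar : u₁ - u₂ + u₃ - u₄ = 0)
    (hX : ∃ x : ℝ, 0 < x ∧
      -((u₂ - u) * (u₄ - u)) / ((u₁ - u) * (u₃ - u)) = (x : ℂ))
    (hrep : (u₁ - u) + (u₂ - u) + (u₃ - u) + (u₄ - u) = 0) :
    u = (u₁ + u₃) / 2 ∧ u = (u₂ + u₄) / 2 ∧
      ‖u₁ - u₂‖ = ‖u₂ - u₃‖ := by
  obtain ⟨x, hx, hXeq⟩ := hX
  have h13 : u₃ - u = -(u₁ - u) := by linear_combination (hpar + hrep) / 2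
  have h24 : u₄ - u = -(u₂ - u) := by linear_combination (hrep - hpar) / 2
  refine ⟨by linear_combination -h13 / 2, by linear_combination -h24 / 2, ?_⟩
  have ha : u₁ - u ≠ 0 := left_ne_zero_of_mul hden
  have hw : ((u₂ - u) / (u₁ - u)) ^ 2 = -(x : ℂ) := by
    rw [← hXeq, h13, h24]
    field_simp
  have hb : u₂ - u = (u₂ - u) / (u₁ - u) * (u₁ - u) := (div_mul_cancel₀ _ ha).symm
  set w := (u₂ - u) / (u₁ - u)
  calc ‖u₁ - u₂‖ = ‖(u₁ - u) - w * (u₁ - u)‖ := by rw [← hb]; ring_nf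
    _ = ‖(u₁ - u) + w * (u₁ - u)‖ :=
      norm_sub_mul_eq_norm_add_mul (re_eq_zero_of_sq_eq_neg_ofReal hx.le hw) _
    _ = ‖u₂ - u₃‖ := by rw [← hb]; congr 1; linear_combination h13

/-- in the parallelogram case, if `X > 0` and the central relation has a
repeated root `ũ = u`, then `u` is the center of the parallelogram `u₁u₂u₃u₄` and the
parallelogram is a rhombus. -/
theorem stmt7 (u u₁ u₂ u₃ u₄ : ℂ)
    (hdist : List.Pairwise (· ≠ ·) [u, u₁, u₂, u₃, u₄])
    (hden : (u₁ - u) * (u₃ - u) ≠ 0)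
    (hpar : u₁ - u₂ + u₃ - u₄ = 0)
    (hX : ∃ x : ℝ, 0 < x ∧
      -((u₂ - u) * (u₄ - u)) / ((u₁ - u) * (u₃ - u)) = (x : ℂ))
    (hrep : (u₁ - u) + (u₂ - u) + (u₃ - u) + (u₄ - u) = 0) :
    u = (u₁ + u₃) / 2 ∧ u = (u₂ + u₄) / 2 ∧
      ‖u₁ - u₂‖ = ‖u₂ - u₃‖ :=
  stmt7_general u u₁ u₂ u₃ u₄ hden hpar hX hrep
end

section
/- Let $A, B, \tilde{A}, \tilde{B}$ be four concyclic points in $\mathbb{C}$ and let $u, u_1, u_2, u_3$ be points such that $u_3 - u_2$ is perpendicular to $\tilde{B} - B$, $u - u_2$ is perpendicular to $B - A$, and $u_1 - u_2$ is perpendicular to $A - \tilde{A}$. Then for any point $\tilde{u} \in \mathbb{C}$: $\tilde{u} - u_2$ is perpendicular to $\tilde{A} - \tilde{B}$ if and only if $\frac{(\tilde{u}-u_2)(u-u_2)}{(u_1-u_2)(u_3-u_2)}$ is real. -/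
open Complex

/-- Two complex numbers are perpendicular (as plane vectors). -/
def Perp (z w : ℂ) : Prop := z * (starRingEnd ℂ) w + (starRingEnd ℂ) z * w = 0

/-- given concyclic `A, B, Ã, B̃` and the three perpendicularity
relations, `ũ - u₂ ⊥ Ã - B̃` iff `((ũ-u₂)(u-u₂))/((u₁-u₂)(u₃-u₂))` is real. -/
theorem stmt12 (A B A' B' u u₁ u₂ u₃ : ℂ)
    (hconc : (((A - A') * (B - B')) / ((A - B') * (B - A'))).im = 0)
    (hne1 : A - B' ≠ 0) (hne2 : B - A' ≠ 0) (hne3 : u₃ - u₂ ≠ 0)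
    (hne4 : B' - B ≠ 0) (hne5 : u - u₂ ≠ 0) (hne6 : B - A ≠ 0)
    (hne7 : u₁ - u₂ ≠ 0) (hne8 : A - A' ≠ 0) (hne9 : A' - B' ≠ 0)
    (hp1 : Perp (u₃ - u₂) (B' - B))
    (hp2 : Perp (u - u₂) (B - A))
    (hp3 : Perp (u₁ - u₂) (A - A')) :
    ∀ ut : ℂ, (Perp (ut - u₂) (A' - B') ↔
      (((ut - u₂) * (u - u₂)) / ((u₁ - u₂) * (u₃ - u₂))).im = 0) := by
  have cne : ∀ z : ℂ, z ≠ 0 → (starRingEnd ℂ) z ≠ 0 := fun z hz h0 =>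
    hz (by rw [← Complex.conj_conj z, h0, map_zero])
  unfold Perp at hp1 hp2 hp3
  have hd : (A - B') * (B - A') ≠ 0 := mul_ne_zero hne1 hne2
  have h0 : (starRingEnd ℂ) (((A - A') * (B - B')) / ((A - B') * (B - A'))) =
      ((A - A') * (B - B')) / ((A - B') * (B - A')) := Complex.conj_eq_iff_im.mpr hconc
  rw [map_div₀, div_eq_div_iff (cne _ hd) hd] at h0
  have hX : (starRingEnd ℂ) (A - A') * (starRingEnd ℂ) (B' - B) * ((B - A) * (A' - B'))
      = (A - A') * (B' - B) * ((starRingEnd ℂ) (B - A) * (starRingEnd ℂ) (A' - B')) := by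
    simp only [map_mul, map_sub] at h0 ⊢
    linear_combination -h0
  intro ut
  have hg1g3 : (u₁ - u₂) * (u₃ - u₂) ≠ 0 := mul_ne_zero hne7 hne3
  constructor
  · intro h
    unfold Perp at h
    rw [← Complex.conj_eq_iff_im, map_div₀, div_eq_div_iff (cne _ hg1g3) hg1g3]
    have hN : (B - A) * (A' - B') * ((A - A') * (B' - B)) ≠ 0 :=
      mul_ne_zero (mul_ne_zero hne6 hne9) (mul_ne_zero hne8 hne4)
    apply mul_right_cancel₀ hN
    simp only [map_mul, map_sub] at h hp1 hp2 hp3 hX ⊢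
    linear_combination
      (-((ut-u₂)*(u-u₂)*(u₁-u₂)*(u₃-u₂))) * hX
      + (-((u-u₂)*((starRingEnd ℂ) B - (starRingEnd ℂ) A)*(u₁-u₂)*(u₃-u₂)*(A-A')*(B'-B))) * h
      + (((starRingEnd ℂ) ut - (starRingEnd ℂ) u₂)*(u₁-u₂)*(u₃-u₂)*(A'-B')*(A-A')*(B'-B)) * hp2
      + ((ut-u₂)*(u-u₂)*(B-A)*(A'-B')*(u₁-u₂)*((starRingEnd ℂ) A - (starRingEnd ℂ) A')) * hp1
      - ((ut-u₂)*(u-u₂)*(B-A)*(A'-B')*((starRingEnd ℂ) u₃ - (starRingEnd ℂ) u₂)*(B'-B)) * hp3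
  · intro h
    rw [← Complex.conj_eq_iff_im, map_div₀, div_eq_div_iff (cne _ hg1g3) hg1g3] at h
    show (ut - u₂) * (starRingEnd ℂ) (A' - B') + (starRingEnd ℂ) (ut - u₂) * (A' - B') = 0
    have hN' : (u - u₂) * (starRingEnd ℂ) (B - A) * (u₁ - u₂) * (u₃ - u₂) * (A - A') * (B' - B) ≠ 0 :=
      mul_ne_zero (mul_ne_zero (mul_ne_zero (mul_ne_zero (mul_ne_zero hne5 (cne _ hne6)) hne7) hne3) hne8) hne4
    have key : ((ut - u₂) * (starRingEnd ℂ) (A' - B') + (starRingEnd ℂ) (ut - u₂) * (A' - B')) *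
        ((u - u₂) * (starRingEnd ℂ) (B - A) * (u₁ - u₂) * (u₃ - u₂) * (A - A') * (B' - B)) = 0 := by
      simp only [map_mul, map_sub] at h hp1 hp2 hp3 hX ⊢
      linear_combination
        (((starRingEnd ℂ) ut - (starRingEnd ℂ) u₂)*(A'-B')*(u₁-u₂)*(u₃-u₂)*(A-A')*(B'-B)) * hp2
        - ((B-A)*(A'-B')*(A-A')*(B'-B)) * h
        - ((ut-u₂)*(u-u₂)*(u₁-u₂)*(u₃-u₂)) * hX
        + ((ut-u₂)*(u-u₂)*(B-A)*(A'-B')*(u₁-u₂)*((starRingEnd ℂ) A - (starRingEnd ℂ) A')) * hp1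
        - ((ut-u₂)*(u-u₂)*(B-A)*(A'-B')*((starRingEnd ℂ) u₃ - (starRingEnd ℂ) u₂)*(B'-B)) * hp3
    exact (mul_eq_zero.mp key).resolve_right hN'
end

section
/- Let $u: F(\mathbb{Z}^2) \to \mathbb{C}$ be circle centers such that for every face $(m,n)$, the point $u_{m,n}$ is the incenter of the tangential quadrilateral formed by $u_{m+1,n}, u_{m,n+1}, u_{m-1,n}, u_{m,n-1}$ (i.e., $u_{m,n}$ lies on all four interior angle bisectors). Define $z_r = $ intersection of lines $u_{m,n}u_{m+1,n+1}$ and $u_{m,n+1}u_{m+1,n}$, and $z_l = $ intersection of lines $u_{m,n}u_{m-1,n+1}$ and $u_{m,n+1}u_{m-1,n}$. Then $z_r$ is the image of $z_l$ under reflection across the line through $u_{m,n}$ and $u_{m,n+1}$. -/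
/-!
The reflection `R` across the line `u_{m,n} u_{m,n+1}` is an involution fixing `u_{m,n}` and
`u_{m,n+1}`. By the bisector conditions it maps the ray `u_{m,n} u_{m+1,n+1}` onto the ray
`u_{m,n} u_{m-1,n+1}`, hence (being an involution) the line `u_{m,n} u_{m-1,n+1}` onto the line
`u_{m,n} u_{m+1,n+1}`; likewise for the lines through `u_{m,n+1}`. So `R z_l` lies on both lines
defining `z_r`, which meet in a single point.
-/

open Complex

/-- Reflection of `z` across the line through `a` and `b` (for `a ≠ b`). -/
noncomputable def reflLine (a b z : ℂ) : ℂ :=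
  a + ((b - a) / (starRingEnd ℂ) (b - a)) * (starRingEnd ℂ) (z - a)

open ComplexConjugate

namespace reflLine

variable {a b : ℂ}

lemma sub_reflLine (a b z w : ℂ) :
    reflLine a b z - reflLine a b w = (b - a) / conj (b - a) * conj (z - w) := by
  simp only [reflLine, map_sub]; ring

lemma apply_left (a b : ℂ) : reflLine a b a = a := by simp [reflLine]

lemma apply_right (hab : a ≠ b) : reflLine a b b = b := by
  have : conj (b - a) ≠ 0 := (map_ne_zero _).mpr (sub_ne_zero.mpr hab.symm)
  simp only [reflLine]; field_simp; ring

lemma involutive (hab : a ≠ b) (z : ℂ) : reflLine a b (reflLine a b z) = z := by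
  have hba : b - a ≠ 0 := sub_ne_zero.mpr hab.symm
  have hunit : (b - a) / conj (b - a) * conj ((b - a) / conj (b - a)) = 1 := by
    rw [map_div₀, conj_conj, div_mul_div_comm, mul_comm]
    exact div_self (mul_ne_zero ((map_ne_zero conj).mpr hba) hba)
  calc reflLine a b (reflLine a b z)
      = a + (b - a) / conj (b - a) * conj ((b - a) / conj (b - a)) * (z - a) := by
        simp only [reflLine, add_sub_cancel_left, map_mul, conj_conj]; ring
    _ = z := by rw [hunit]; ring

lemma add_real_mul (p w : ℂ) (s : ℝ) :
    reflLine a b (p + s * w) = reflLine a b p + s * (reflLine a b (p + w) - reflLine a b p) := by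
  rw [← sub_eq_iff_eq_add', sub_reflLine, sub_reflLine]
  simp only [add_sub_cancel_left, map_mul, conj_ofReal]; ring

/-- If the reflection sends the ray from a fixed point `p` through `q` onto the ray from `p`
in direction `w`, it sends the line through `p` in direction `w` back onto the line `pq`. -/
lemma add_real_mul_of_sub_eq (hab : a ≠ b) {p q w : ℂ} {t : ℝ} (ht : t ≠ 0)
    (hp : reflLine a b p = p) (hq : reflLine a b q - p = t * w) (s : ℝ) :
    reflLine a b (p + s * w) = p + (s / t : ℝ) * (q - p) := by
  have hq' : q = p + t * (reflLine a b (p + w) - p) := by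
    rw [← involutive hab q, sub_eq_iff_eq_add'.mp hq, add_real_mul, hp]
  rw [add_real_mul, hp, hq']
  have ht' : (t : ℂ) ≠ 0 := ofReal_ne_zero.mpr ht
  push_cast; field_simp; ring

end reflLine

lemma eq_of_add_real_mul_eq {p q v w z z' : ℂ} (hvw : (conj v * w).im ≠ 0) {α β α' β' : ℝ}
    (hz₁ : z = p + α * v) (hz₂ : z = q + β * w) (hz₁' : z' = p + α' * v)
    (hz₂' : z' = q + β' * w) : z = z' := by
  have hdiff : conj v * ((α - α' : ℝ) * v) = (β - β' : ℝ) * (conj v * w) := by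
    push_cast; linear_combination conj v * (hz₁' - hz₂' - hz₁ + hz₂)
  have hβ : β - β' = 0 := by
    have := congrArg Complex.im hdiff
    rw [mul_left_comm, ← normSq_eq_conj_mul_self, ← ofReal_mul, ofReal_im, im_ofReal_mul]
      at this
    exact (mul_eq_zero.mp this.symm).resolve_right hvw
  rw [hz₂, hz₂', sub_eq_zero.mp hβ]

theorem stmt15_general (u : ℤ × ℤ → ℂ) (m n : ℤ)
    (hab : u (m, n + 1) ≠ u (m, n))
    (hbis1 : ∃ t : ℝ, 0 < t ∧
      reflLine (u (m, n)) (u (m, n + 1)) (u (m + 1, n + 1)) - u (m, n)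
        = (t : ℂ) * (u (m - 1, n + 1) - u (m, n)))
    (hbis2 : ∃ t : ℝ, 0 < t ∧
      reflLine (u (m, n)) (u (m, n + 1)) (u (m + 1, n)) - u (m, n + 1)
        = (t : ℂ) * (u (m - 1, n) - u (m, n + 1)))
    (zr zl : ℂ)
    (hzr1 : ∃ s : ℝ, zr = u (m, n) + (s : ℂ) * (u (m + 1, n + 1) - u (m, n)))
    (hzr2 : ∃ s : ℝ, zr = u (m, n + 1) + (s : ℂ) * (u (m + 1, n) - u (m, n + 1)))
    (hzl1 : ∃ s : ℝ, zl = u (m, n) + (s : ℂ) * (u (m - 1, n + 1) - u (m, n)))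
    (hzl2 : ∃ s : ℝ, zl = u (m, n + 1) + (s : ℂ) * (u (m - 1, n) - u (m, n + 1)))
    (hnpr : ((starRingEnd ℂ) (u (m + 1, n + 1) - u (m, n)) *
      (u (m + 1, n) - u (m, n + 1))).im ≠ 0) :
    reflLine (u (m, n)) (u (m, n + 1)) zl = zr := by
  have hne : u (m, n) ≠ u (m, n + 1) := hab.symm
  obtain ⟨t₁, ht₁, hq₁⟩ := hbis1
  obtain ⟨t₂, ht₂, hq₂⟩ := hbis2
  obtain ⟨s₁, rfl⟩ := hzl1
  obtain ⟨s₂, hzl₂⟩ := hzl2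
  obtain ⟨r₁, hzr₁⟩ := hzr1
  obtain ⟨r₂, hzr₂⟩ := hzr2
  have hR₁ := reflLine.add_real_mul_of_sub_eq hne ht₁.ne' (reflLine.apply_left _ _) hq₁ s₁
  have hR₂ := reflLine.add_real_mul_of_sub_eq hne ht₂.ne' (reflLine.apply_right hne) hq₂ s₂
  rw [← hzl₂] at hR₂
  exact eq_of_add_real_mul_eq hnpr hR₁ hR₂ hzr₁ hzr₂

/-- if each `u_{m,n}` is the incenter of the quadrilateral of its four
neighbors (expressed via the reflection across the line `u_{m,n} u_{m,n+1}` mapping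
the relevant rays to each other), then the intersection `z_r` of the diagonals
`u_{m,n}u_{m+1,n+1}` and `u_{m,n+1}u_{m+1,n}` is the reflection across the line
`u_{m,n}u_{m,n+1}` of the intersection `z_l` of `u_{m,n}u_{m-1,n+1}` and
`u_{m,n+1}u_{m-1,n}`. -/
theorem stmt15 (u : ℤ × ℤ → ℂ) (m n : ℤ)
    (hab : u (m, n + 1) ≠ u (m, n))
    (hbis1 : ∃ t : ℝ, 0 < t ∧
      reflLine (u (m, n)) (u (m, n + 1)) (u (m + 1, n + 1)) - u (m, n)
        = (t : ℂ) * (u (m - 1, n + 1) - u (m, n)))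
    (hbis2 : ∃ t : ℝ, 0 < t ∧
      reflLine (u (m, n)) (u (m, n + 1)) (u (m + 1, n)) - u (m, n + 1)
        = (t : ℂ) * (u (m - 1, n) - u (m, n + 1)))
    (zr zl : ℂ)
    (hzr1 : ∃ s : ℝ, zr = u (m, n) + (s : ℂ) * (u (m + 1, n + 1) - u (m, n)))
    (hzr2 : ∃ s : ℝ, zr = u (m, n + 1) + (s : ℂ) * (u (m + 1, n) - u (m, n + 1)))
    (hzl1 : ∃ s : ℝ, zl = u (m, n) + (s : ℂ) * (u (m - 1, n + 1) - u (m, n)))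
    (hzl2 : ∃ s : ℝ, zl = u (m, n + 1) + (s : ℂ) * (u (m - 1, n) - u (m, n + 1)))
    (hnpr : ((starRingEnd ℂ) (u (m + 1, n + 1) - u (m, n)) *
      (u (m + 1, n) - u (m, n + 1))).im ≠ 0)
    (hnpl : ((starRingEnd ℂ) (u (m - 1, n + 1) - u (m, n)) *
      (u (m - 1, n) - u (m, n + 1))).im ≠ 0) :
    reflLine (u (m, n)) (u (m, n + 1)) zl = zr :=
  stmt15_general u m n hab hbis1 hbis2 zr zl hzr1 hzr2 hzl1 hzl2 hnpr
end

section
/- Steiner's theorem: Let $A, B, C$ and $A', B', C'$ be two triangles in the plane. The perpendicular from $C'$ to line $AB$, the perpendicular from $A'$ to line $BC$, and the perpendicular from $B'$ to line $AC$ are concurrent if and only if the perpendicular from $C$ to line $A'B'$, the perpendicular from $A$ to line $B'C'$, and the perpendicular from $B$ to line $A'C'$ are concurrent. -/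
open Complex

lemma dne (d : ℂ) (hd : d ≠ 0) : d.re^2 + d.im^2 ≠ 0 := by
  intro h
  apply hd
  have h1 : d.re = 0 := by nlinarith [sq_nonneg d.re, sq_nonneg d.im]
  have h2 : d.im = 0 := by nlinarith [sq_nonneg d.re, sq_nonneg d.im]
  exact Complex.ext h1 h2

lemma mem_perp (P d Z : ℂ) (hd : d ≠ 0) :
    (∃ t : ℝ, Z = P + (t : ℂ) * (Complex.I * d)) ↔
      (Z.re - P.re) * d.re + (Z.im - P.im) * d.im = 0 := by
  have hn := dne d hd
  constructor
  · rintro ⟨t, rfl⟩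
    simp only [Complex.add_re, Complex.add_im, Complex.mul_re, Complex.mul_im,
      Complex.I_re, Complex.I_im, Complex.ofReal_re, Complex.ofReal_im]
    ring
  · intro h
    refine ⟨((Z.im - P.im) * d.re - (Z.re - P.re) * d.im) / (d.re^2 + d.im^2), ?_⟩
    obtain ⟨t, ht⟩ : ∃ t : ℝ, t = ((Z.im - P.im) * d.re - (Z.re - P.re) * d.im) / (d.re^2 + d.im^2) := ⟨_, rfl⟩
    rw [← ht]
    have ht' : t * (d.re^2 + d.im^2) = (Z.im - P.im) * d.re - (Z.re - P.re) * d.im := by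
      rw [ht, div_mul_cancel₀ _ hn]
    have hre : Z.re - P.re = -(t * d.im) := by
      have h0 : (Z.re - P.re) * (d.re^2 + d.im^2) = (-(t * d.im)) * (d.re^2 + d.im^2) := by
        linear_combination d.im * ht' + d.re * h
      exact mul_right_cancel₀ hn h0
    have him : Z.im - P.im = t * d.re := by
      have h0 : (Z.im - P.im) * (d.re^2 + d.im^2) = (t * d.re) * (d.re^2 + d.im^2) := by
        linear_combination (-d.re) * ht' + d.im * h
      exact mul_right_cancel₀ hn h0
    apply Complex.ext <;>
      simp only [Complex.add_re, Complex.add_im, Complex.mul_re, Complex.mul_im,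
        Complex.I_re, Complex.I_im, Complex.ofReal_re, Complex.ofReal_im] <;>
      linarith [hre, him]

lemma concur_iff (a b c p q r : ℂ)
    (h : (b-a).re * (c-a).im - (b-a).im * (c-a).re ≠ 0) :
    ((∃ Z : ℂ,
        (∃ t : ℝ, Z = r + (t : ℂ) * (Complex.I * (b - a))) ∧
        (∃ t : ℝ, Z = p + (t : ℂ) * (Complex.I * (c - b))) ∧
        (∃ t : ℝ, Z = q + (t : ℂ) * (Complex.I * (c - a)))) ↔
      (-(r.re * (b-a).re + r.im * (b-a).im) - (p.re * (c-b).re + p.im * (c-b).im)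
        + (q.re * (c-a).re + q.im * (c-a).im) = 0)) := by
  have hba : b - a ≠ 0 := by
    intro hh; apply h; rw [hh]; simp
  have hcb : c - b ≠ 0 := by
    intro hh; apply h
    have : c = b := by linear_combination hh
    subst this; ring
  have hca : c - a ≠ 0 := by
    intro hh; apply h; rw [hh]; simp
  -- abbreviations
  obtain ⟨u1, hu1⟩ : ∃ x : ℝ, x = (b-a).re := ⟨_, rfl⟩
  obtain ⟨u2, hu2⟩ : ∃ x : ℝ, x = (b-a).im := ⟨_, rfl⟩
  obtain ⟨v1, hv1⟩ : ∃ x : ℝ, x = (c-b).re := ⟨_, rfl⟩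
  obtain ⟨v2, hv2⟩ : ∃ x : ℝ, x = (c-b).im := ⟨_, rfl⟩
  obtain ⟨w1, hw1⟩ : ∃ x : ℝ, x = (c-a).re := ⟨_, rfl⟩
  obtain ⟨w2, hw2⟩ : ∃ x : ℝ, x = (c-a).im := ⟨_, rfl⟩
  have hw1' : w1 = u1 + v1 := by
    rw [hw1, hu1, hv1]; simp only [Complex.sub_re]; ring
  have hw2' : w2 = u2 + v2 := by
    rw [hw2, hu2, hv2]; simp only [Complex.sub_im]; ring
  have hD : u1 * w2 - u2 * w1 ≠ 0 := by rw [hu1, hu2, hw1, hw2]; exact h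
  have hD' : u1 * v2 - u2 * v1 = u1 * w2 - u2 * w1 := by
    rw [hw1', hw2']; ring
  rw [← hu1, ← hu2, ← hv1, ← hv2, ← hw1, ← hw2]
  constructor
  · rintro ⟨Z, hz1, hz2, hz3⟩
    rw [mem_perp _ _ _ hba] at hz1
    rw [mem_perp _ _ _ hcb] at hz2
    rw [mem_perp _ _ _ hca] at hz3
    rw [← hu1, ← hu2] at hz1
    rw [← hv1, ← hv2] at hz2
    rw [← hw1, ← hw2] at hz3
    rw [hw1', hw2'] at hz3
    rw [hw1', hw2']
    linear_combination hz1 + hz2 - hz3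
  · intro hK
    obtain ⟨x, hx⟩ : ∃ x : ℝ, x = ((r.re * u1 + r.im * u2) * v2 - (p.re * v1 + p.im * v2) * u2) / (u1 * w2 - u2 * w1) := ⟨_, rfl⟩
    obtain ⟨y, hy⟩ : ∃ y : ℝ, y = (u1 * (p.re * v1 + p.im * v2) - v1 * (r.re * u1 + r.im * u2)) / (u1 * w2 - u2 * w1) := ⟨_, rfl⟩
    have hxD : x * (u1 * w2 - u2 * w1) = (r.re * u1 + r.im * u2) * v2 - (p.re * v1 + p.im * v2) * u2 := by
      rw [hx]; field_simp
    have hyD : y * (u1 * w2 - u2 * w1) = u1 * (p.re * v1 + p.im * v2) - v1 * (r.re * u1 + r.im * u2) := by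
      rw [hy]; field_simp
    have hZre : ((x : ℂ) + (y : ℂ) * Complex.I).re = x := by simp
    have hZim : ((x : ℂ) + (y : ℂ) * Complex.I).im = y := by simp
    have hf1 : (x - r.re) * u1 + (y - r.im) * u2 = 0 := by
      have h0 : ((x - r.re) * u1 + (y - r.im) * u2) * (u1 * w2 - u2 * w1) = 0 := by
        linear_combination u1 * hxD + u2 * hyD + (r.re * u1 + r.im * u2) * hD'
      exact (mul_eq_zero.mp h0).resolve_right hD
    have hf2 : (x - p.re) * v1 + (y - p.im) * v2 = 0 := by
      have h0 : ((x - p.re) * v1 + (y - p.im) * v2) * (u1 * w2 - u2 * w1) = 0 := by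
        linear_combination v1 * hxD + v2 * hyD + (p.re * v1 + p.im * v2) * hD'
      exact (mul_eq_zero.mp h0).resolve_right hD
    have hf3 : (x - q.re) * w1 + (y - q.im) * w2 = 0 := by
      rw [hw1', hw2'] at hK ⊢
      linear_combination hf1 + hf2 - hK
    refine ⟨(x : ℂ) + (y : ℂ) * Complex.I, ?_, ?_, ?_⟩
    · rw [mem_perp _ _ _ hba, hZre, hZim, ← hu1, ← hu2]; exact hf1
    · rw [mem_perp _ _ _ hcb, hZre, hZim, ← hv1, ← hv2]; exact hf2
    · rw [mem_perp _ _ _ hca, hZre, hZim, ← hw1, ← hw2]; exact hf3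

lemma cross_ne (a b c : ℂ) (h : ¬ Collinear ℝ ({a, b, c} : Set ℂ)) :
    (b-a).re * (c-a).im - (b-a).im * (c-a).re ≠ 0 := by
  intro hc
  apply h
  rw [collinear_iff_of_mem (Set.mem_insert a _)]
  by_cases hba : b = a
  · refine ⟨c - a, ?_⟩
    intro p hp
    simp only [Set.mem_insert_iff, Set.mem_singleton_iff] at hp
    rcases hp with hp | hp | hp
    · exact ⟨0, by simp [hp]⟩
    · exact ⟨0, by simp [hp, hba]⟩
    · exact ⟨1, by simp [hp]⟩
  · have hba' : b - a ≠ 0 := sub_ne_zero.mpr hba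
    have hn := dne _ hba'
    refine ⟨b - a, ?_⟩
    intro p hp
    simp only [Set.mem_insert_iff, Set.mem_singleton_iff] at hp
    rcases hp with hp | hp | hp
    · exact ⟨0, by simp [hp]⟩
    · exact ⟨1, by simp [hp]⟩
    · subst hp
      obtain ⟨s, hs⟩ : ∃ s : ℝ, s = ((p-a).re * (b-a).re + (p-a).im * (b-a).im) / ((b-a).re^2 + (b-a).im^2) := ⟨_, rfl⟩
      refine ⟨s, ?_⟩
      have hs' : s * ((b-a).re^2 + (b-a).im^2) = (p-a).re * (b-a).re + (p-a).im * (b-a).im := by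
        rw [hs, div_mul_cancel₀ _ hn]
      simp only [Complex.sub_re, Complex.sub_im] at hs' hc hn
      have hre : p.re - a.re = s * (b.re - a.re) := by
        have h0 : (p.re - a.re) * ((b.re - a.re)^2 + (b.im - a.im)^2)
            = (s * (b.re - a.re)) * ((b.re - a.re)^2 + (b.im - a.im)^2) := by
          linear_combination (-(b.re - a.re)) * hs' - (b.im - a.im) * hc
        exact mul_right_cancel₀ hn h0
      have him : p.im - a.im = s * (b.im - a.im) := by
        have h0 : (p.im - a.im) * ((b.re - a.re)^2 + (b.im - a.im)^2)
            = (s * (b.im - a.im)) * ((b.re - a.re)^2 + (b.im - a.im)^2) := by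
          linear_combination (-(b.im - a.im)) * hs' + (b.re - a.re) * hc
        exact mul_right_cancel₀ hn h0
      have : p = (s : ℂ) * (b - a) + a := by
        apply Complex.ext <;>
          simp only [Complex.add_re, Complex.add_im, Complex.mul_re, Complex.mul_im,
            Complex.ofReal_re, Complex.ofReal_im, Complex.sub_re, Complex.sub_im] <;>
          linarith [hre, him]
      simpa [Complex.real_smul] using this

/-- Steiner's theorem: the perpendiculars from `C'` to `AB`, from `A'`
to `BC` and from `B'` to `AC` are concurrent iff the perpendiculars from `C` to
`A'B'`, from `A` to `B'C'` and from `B` to `A'C'` are concurrent. -/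
theorem stmt16 (A B C A' B' C' : ℂ)
    (h1 : ¬ Collinear ℝ ({A, B, C} : Set ℂ))
    (h2 : ¬ Collinear ℝ ({A', B', C'} : Set ℂ)) :
    ((∃ Z : ℂ,
        (∃ t : ℝ, Z = C' + (t : ℂ) * (Complex.I * (B - A))) ∧
        (∃ t : ℝ, Z = A' + (t : ℂ) * (Complex.I * (C - B))) ∧
        (∃ t : ℝ, Z = B' + (t : ℂ) * (Complex.I * (C - A))))
      ↔
      (∃ Z : ℂ,
        (∃ t : ℝ, Z = C + (t : ℂ) * (Complex.I * (B' - A'))) ∧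
        (∃ t : ℝ, Z = A + (t : ℂ) * (Complex.I * (C' - B'))) ∧
        (∃ t : ℝ, Z = B + (t : ℂ) * (Complex.I * (C' - A'))))) := by
  rw [concur_iff A B C A' B' C' (cross_ne A B C h1),
    concur_iff A' B' C' A B C (cross_ne A' B' C' h2)]
  have key : -(C'.re * (B-A).re + C'.im * (B-A).im) - (A'.re * (C-B).re + A'.im * (C-B).im)
        + (B'.re * (C-A).re + B'.im * (C-A).im)
      = -(-(C.re * (B'-A').re + C.im * (B'-A').im) - (A.re * (C'-B').re + A.im * (C'-B').im)
        + (B.re * (C'-A').re + B.im * (C'-A').im)) := by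
    simp only [Complex.sub_re, Complex.sub_im]
    ring
  constructor <;> intro hh <;> linarith [key, hh]
end
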